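/- arXiv:2005.01271 — 3 statements merged into one kernel-verified Lean document; each statement's English description precedes it below -/
import Mathlib

section
/- Let k ≥ 2 be an integer. Every symmetric polynomial matrix τ whose entries have total degree at most k can be written as τ = sym curl v + x xᵀ q, where v = (v₁, v₂) is a polynomial vector field with components of total degree at most k+1 and q is a polynomial of total degree at most k−2; moreover the polynomial q is uniquely determined by τ. -/
open MvPolynomial Matrix

/-- Real polynomials in two variables. -/
abbrev P2 := MvPolynomial (Fin 2) ℝ

/-- The matrix `curl v` of a polynomial vector field, defined row-wise:
`(curl v)_{i1} = ∂₂ vᵢ`, `(curl v)_{i2} = -∂₁ vᵢ`. -/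
noncomputable def pcurl (v : Fin 2 → P2) : Matrix (Fin 2) (Fin 2) P2 :=
  Matrix.of fun i j =>
    if j = 0 then pderiv (1 : Fin 2) (v i) else -(pderiv (0 : Fin 2) (v i))

/-- `sym curl v := (curl v + (curl v)ᵀ)/2`. -/
noncomputable def psymCurl (v : Fin 2 → P2) : Matrix (Fin 2) (Fin 2) P2 :=
  (1 / 2 : ℝ) • (pcurl v + (pcurl v)ᵀ)

/-- `div div τ := Σ_{i,j} ∂ᵢ∂ⱼ τ_{ij}`. -/
noncomputable def pdivDiv (τ : Matrix (Fin 2) (Fin 2) P2) : P2 :=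
  ∑ i : Fin 2, ∑ j : Fin 2, pderiv i (pderiv j (τ i j))

/-- The matrix `x xᵀ q` with `(i,j)`-entry `Xᵢ · Xⱼ · q`. -/
noncomputable def xxT (q : P2) : Matrix (Fin 2) (Fin 2) P2 :=
  Matrix.of fun i j => X i * X j * q

/-- The polynomial vector `x^⊥ = (X₂, -X₁)`. -/
noncomputable def xPerp : Fin 2 → P2 := ![X 1, -X 0]

/-- `rot τ`, with components `(rot τ)ᵢ = ∂₁ τ_{i2} - ∂₂ τ_{i1}`. -/
noncomputable def prot (τ : Matrix (Fin 2) (Fin 2) P2) : Fin 2 → P2 :=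
  fun i => pderiv (0 : Fin 2) (τ i 1) - pderiv (1 : Fin 2) (τ i 0)

/-- The Hessian matrix `∇²q` with entries `∂ᵢ∂ⱼ q`. -/
noncomputable def phess (q : P2) : Matrix (Fin 2) (Fin 2) P2 :=
  Matrix.of fun i j => pderiv i (pderiv j q)

/-- `sym(x^⊥ ⊗ v)`, the symmetric matrix with `(i,j)`-entry
`((x^⊥)ᵢ vⱼ + vᵢ (x^⊥)ⱼ)/2`. -/
noncomputable def symTen (v : Fin 2 → P2) : Matrix (Fin 2) (Fin 2) P2 :=
  Matrix.of fun i j => (1 / 2 : ℝ) • (xPerp i * v j + v i * xPerp j)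

/-- The gradient matrix `∇v` with entries `(∇v)_{ij} = ∂ⱼ vᵢ`. -/
noncomputable def pgrad (v : Fin 2 → P2) : Matrix (Fin 2) (Fin 2) P2 :=
  Matrix.of fun i j => pderiv j (v i)

/-- The symmetric gradient `def v := (∇v + (∇v)ᵀ)/2`. -/
noncomputable def pdef (v : Fin 2 → P2) : Matrix (Fin 2) (Fin 2) P2 :=
  (1 / 2 : ℝ) • (pgrad v + (pgrad v)ᵀ)

/-- The matrix `x^⊥ (x^⊥)ᵀ q` with `(i,j)`-entry `(x^⊥)ᵢ (x^⊥)ⱼ q`. -/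
noncomputable def xPerpxPerpT (q : P2) : Matrix (Fin 2) (Fin 2) P2 :=
  Matrix.of fun i j => xPerp i * xPerp j * q

/-- `rot rot τ := ∂₁(rot τ)₂ − ∂₂(rot τ)₁`. -/
noncomputable def protRot (τ : Matrix (Fin 2) (Fin 2) P2) : P2 :=
  pderiv (0 : Fin 2) (prot τ 1) - pderiv (1 : Fin 2) (prot τ 0)

/-!
`div div` annihilates `sym curl v`, while on `x xᵀ q` it multiplies the coefficient of `x^t` by
`(|t| + 2)(|t| + 3)`. So `q` must be the preimage of `div div τ` under this invertible diagonal
operator, which gives uniqueness and the degree bound. Conversely `σ = τ - x xᵀ q` is symmetric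
with `div div σ = 0`: integrating `σ₁₁` in `x₂` and `σ₂₂` in `x₁` produces the diagonal of a
`sym curl`, and the remaining off-diagonal equation asks to write a polynomial `r` with
`∂₁∂₂ r = 0` as `∂₂ g - ∂₁ f` with `f` free of `x₂` and `g` free of `x₁`.
-/

namespace MvPolynomial

section CommSemiring

variable {σ R : Type*} [CommSemiring R]

theorem pderiv_comm (i j : σ) (p : MvPolynomial σ R) :
    pderiv i (pderiv j p) = pderiv j (pderiv i p) := by
  rcases eq_or_ne i j with rfl | hij
  · rfl
  ext t
  simp only [coeff_pderiv, add_right_comm t (Finsupp.single i 1), Finsupp.add_apply,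
    Finsupp.single_eq_of_ne hij, Finsupp.single_eq_of_ne hij.symm, add_zero]
  ring

theorem totalDegree_pderiv_le {i : σ} {p : MvPolynomial σ R} {n : ℕ}
    (hp : p.totalDegree ≤ n + 1) : (pderiv i p).totalDegree ≤ n := by
  refine Finset.sup_le fun t ht => ?_
  have hne : coeff (t + Finsupp.single i 1) p ≠ 0 := by
    rw [mem_support_iff, coeff_pderiv] at ht
    exact left_ne_zero_of_mul ht
  have := (le_totalDegree (mem_support_iff.mpr hne)).trans hp
  rw [Finsupp.sum_add_index' (fun _ => rfl) (fun _ _ _ => rfl),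
    Finsupp.sum_single_index rfl] at this
  omega

theorem coeff_pderiv_pderiv_X_mul_X_mul (i j : σ) (q : MvPolynomial σ R) (t : σ →₀ ℕ) :
    coeff t (pderiv i (pderiv j (X i * X j * q))) =
      ((t i : R) + 1) * ((t + Finsupp.single i 1 : σ →₀ ℕ) j + 1) * coeff t q := by
  rw [coeff_pderiv, coeff_pderiv, show X i * X j * q = X j * (X i * q) by ring, add_comm t,
    add_comm _ (Finsupp.single j 1), coeff_X_mul, coeff_X_mul]
  push_cast
  ring

noncomputable def mulCoeff (c : (σ →₀ ℕ) → R) (p : MvPolynomial σ R) : MvPolynomial σ R :=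
  ∑ s ∈ p.support, monomial s (c s * coeff s p)

@[simp]
theorem coeff_mulCoeff (c : (σ →₀ ℕ) → R) (p : MvPolynomial σ R) (t : σ →₀ ℕ) :
    coeff t (mulCoeff c p) = c t * coeff t p := by
  classical
  rw [mulCoeff, coeff_sum, Finset.sum_eq_single t]
  · rw [coeff_monomial, if_pos rfl]
  · intro s _ hne
    rw [coeff_monomial, if_neg hne]
  · intro ht
    rw [notMem_support_iff.mp ht, mul_zero, coeff_monomial, if_pos rfl]

theorem totalDegree_mulCoeff_le (c : (σ →₀ ℕ) → R) (p : MvPolynomial σ R) :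
    (mulCoeff c p).totalDegree ≤ p.totalDegree :=
  totalDegree_le_of_support_subset fun t ht => by
    rw [mem_support_iff, coeff_mulCoeff] at ht
    exact mem_support_iff.mpr (right_ne_zero_of_mul ht)

end CommSemiring

section Field

variable {σ K : Type*} [Field K]

noncomputable def integ (i : σ) (p : MvPolynomial σ K) : MvPolynomial σ K :=
  mulCoeff (fun s => ((s i : K) + 1)⁻¹) p * X i

theorem pderiv_integ [CharZero K] (i : σ) (p : MvPolynomial σ K) :
    pderiv i (integ i p) = p := by
  ext t
  rw [coeff_pderiv, integ, coeff_mul_X, coeff_mulCoeff]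
  field_simp

theorem pderiv_integ_of_ne {i j : σ} (hij : i ≠ j) {p : MvPolynomial σ K}
    (hp : pderiv j p = 0) : pderiv j (integ i p) = 0 := by
  have hq : pderiv j (mulCoeff (fun s => ((s i : K) + 1)⁻¹) p) = 0 := by
    ext t
    have := congrArg (coeff t) hp
    rw [coeff_pderiv, coeff_zero] at this ⊢
    rw [coeff_mulCoeff, mul_assoc, this, mul_zero]
  rw [integ, Derivation.leibniz, hq, pderiv_X_of_ne hij, smul_zero, smul_zero, zero_add]

theorem totalDegree_integ_le {i : σ} {p : MvPolynomial σ K} {n : ℕ} (hp : p.totalDegree ≤ n) :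
    (integ i p).totalDegree ≤ n + 1 := by
  refine (totalDegree_mul _ _).trans ?_
  rw [totalDegree_X]
  exact Nat.add_le_add_right ((totalDegree_mulCoeff_le _ _).trans hp) 1

theorem exists_pderiv_sub_pderiv_eq [CharZero K] {i j : σ} (hij : i ≠ j)
    {r : MvPolynomial σ K} {n : ℕ} (hr : pderiv i (pderiv j r) = 0)
    (hdeg : r.totalDegree ≤ n + 1) :
    ∃ f g : MvPolynomial σ K, pderiv j f = 0 ∧ pderiv i g = 0 ∧ pderiv j g - pderiv i f = r ∧
      f.totalDegree ≤ n + 2 ∧ g.totalDegree ≤ n + 2 := by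
  set G := integ j (pderiv j r) with hG
  have hGi : pderiv i G = 0 := pderiv_integ_of_ne hij.symm hr
  have hFj : pderiv j (r - G) = 0 := by rw [map_sub, hG, pderiv_integ, sub_self]
  have hGdeg : G.totalDegree ≤ n + 1 := totalDegree_integ_le (totalDegree_pderiv_le hdeg)
  refine ⟨-integ i (r - G), integ j G, ?_, pderiv_integ_of_ne hij.symm hGi, ?_, ?_,
    totalDegree_integ_le hGdeg⟩
  · rw [map_neg, pderiv_integ_of_ne hij hFj, neg_zero]
  · rw [map_neg, pderiv_integ, pderiv_integ, sub_neg_eq_add, add_sub_cancel]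
  · rw [totalDegree_neg]
    exact totalDegree_integ_le ((totalDegree_sub _ _).trans (max_le hdeg hGdeg))

end Field

end MvPolynomial

theorem pdivDiv_eq (τ : Matrix (Fin 2) (Fin 2) P2) :
    pdivDiv τ = pderiv 0 (pderiv 0 (τ 0 0)) + pderiv 0 (pderiv 1 (τ 0 1)) +
      (pderiv 1 (pderiv 0 (τ 1 0)) + pderiv 1 (pderiv 1 (τ 1 1))) := by
  simp only [pdivDiv, Fin.sum_univ_two]

theorem pdivDiv_add (τ τ' : Matrix (Fin 2) (Fin 2) P2) :
    pdivDiv (τ + τ') = pdivDiv τ + pdivDiv τ' := by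
  simp only [pdivDiv, Matrix.add_apply, map_add, Finset.sum_add_distrib]

theorem pdivDiv_sub (τ τ' : Matrix (Fin 2) (Fin 2) P2) :
    pdivDiv (τ - τ') = pdivDiv τ - pdivDiv τ' := by
  simp only [pdivDiv, Matrix.sub_apply, map_sub, Finset.sum_sub_distrib]

theorem totalDegree_pdivDiv_le {τ : Matrix (Fin 2) (Fin 2) P2} {n : ℕ}
    (hτ : ∀ i j, (τ i j).totalDegree ≤ n + 2) : (pdivDiv τ).totalDegree ≤ n :=
  totalDegree_finsetSum_le fun i _ => totalDegree_finsetSum_le fun j _ =>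
    totalDegree_pderiv_le (totalDegree_pderiv_le (hτ i j))

theorem psymCurl_eq (v : Fin 2 → P2) :
    psymCurl v =
      !![pderiv 1 (v 0), (1 / 2 : ℝ) • (pderiv 1 (v 1) - pderiv 0 (v 0));
        (1 / 2 : ℝ) • (pderiv 1 (v 1) - pderiv 0 (v 0)), -pderiv 0 (v 1)] := by
  refine Matrix.ext fun i j => ?_
  fin_cases i <;> fin_cases j <;> simp [psymCurl, pcurl] <;> module

theorem pdivDiv_psymCurl (v : Fin 2 → P2) : pdivDiv (psymCurl v) = 0 := by
  simp only [pdivDiv, psymCurl_eq, Fin.sum_univ_two, Matrix.of_apply, Matrix.cons_val',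
    Matrix.cons_val_fin_one, Matrix.cons_val_zero, Matrix.cons_val_one, Derivation.map_smul,
    map_sub, map_neg, pderiv_comm (1 : Fin 2) 0]
  module

theorem xxT_transpose (q : P2) : (xxT q)ᵀ = xxT q :=
  Matrix.ext fun i j => by
    simp only [xxT, Matrix.transpose_apply, Matrix.of_apply]
    ring

theorem totalDegree_xxT_apply_le (q : P2) (i j : Fin 2) :
    (xxT q i j).totalDegree ≤ q.totalDegree + 2 := by
  have hXX : (X i * X j : P2).totalDegree ≤ 2 :=
    (totalDegree_mul _ _).trans_eq (by rw [totalDegree_X, totalDegree_X])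
  exact (totalDegree_mul _ _).trans (by omega)

theorem coeff_pdivDiv_xxT (q : P2) (t : Fin 2 →₀ ℕ) :
    coeff t (pdivDiv (xxT q)) = ((t.degree : ℝ) + 2) * ((t.degree : ℝ) + 3) * coeff t q := by
  simp only [pdivDiv, Fin.sum_univ_two, coeff_add, xxT, Matrix.of_apply,
    coeff_pderiv_pderiv_X_mul_X_mul, Finsupp.add_apply, Finsupp.single_eq_same,
    Finsupp.single_eq_of_ne zero_ne_one, Finsupp.single_eq_of_ne one_ne_zero,
    Finsupp.degree_eq_sum]
  push_cast
  ring

noncomputable def pdivDivXXTInv : P2 → P2 :=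
  mulCoeff fun t => (((t.degree : ℝ) + 2) * ((t.degree : ℝ) + 3))⁻¹

theorem pdivDiv_xxT_pdivDivXXTInv (p : P2) : pdivDiv (xxT (pdivDivXXTInv p)) = p := by
  ext t
  rw [coeff_pdivDiv_xxT, pdivDivXXTInv, coeff_mulCoeff, ← mul_assoc,
    mul_inv_cancel₀ (by positivity), one_mul]

theorem pdivDivXXTInv_pdivDiv_xxT (q : P2) : pdivDivXXTInv (pdivDiv (xxT q)) = q := by
  ext t
  rw [pdivDivXXTInv, coeff_mulCoeff, coeff_pdivDiv_xxT, ← mul_assoc,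
    inv_mul_cancel₀ (by positivity), one_mul]

theorem exists_psymCurl_eq {σ : Matrix (Fin 2) (Fin 2) P2} {n : ℕ} (hsym : σᵀ = σ)
    (hdiv : pdivDiv σ = 0) (hdeg : ∀ i j, (σ i j).totalDegree ≤ n + 1) :
    ∃ v : Fin 2 → P2, (∀ i, (v i).totalDegree ≤ n + 2) ∧ psymCurl v = σ := by
  have h10 : σ 1 0 = σ 0 1 := congrFun (congrFun hsym 0) 1
  set a := integ 1 (σ 0 0)
  set b := -integ 0 (σ 1 1)
  have ha : pderiv 1 a = σ 0 0 := pderiv_integ 1 _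
  have hb : pderiv 0 b = -σ 1 1 := by rw [map_neg, pderiv_integ]
  have hadeg : a.totalDegree ≤ n + 2 := totalDegree_integ_le (hdeg 0 0)
  have hbdeg : b.totalDegree ≤ n + 2 :=
    (totalDegree_neg _).trans_le (totalDegree_integ_le (hdeg 1 1))
  have hR : pderiv 0 (pderiv 1 (σ 0 1 + σ 0 1 + pderiv 0 a - pderiv 1 b)) = 0 := by
    rw [pdivDiv_eq, h10, pderiv_comm 1 0 (σ 0 1)] at hdiv
    rw [map_sub, map_add, map_add, map_sub, map_add, map_add, pderiv_comm 1 0 a, ha,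
      pderiv_comm 0 1 (pderiv 1 b), pderiv_comm 0 1 b, hb, map_neg, map_neg]
    linear_combination hdiv
  have hRdeg : (σ 0 1 + σ 0 1 + pderiv 0 a - pderiv 1 b).totalDegree ≤ n + 1 :=
    (totalDegree_sub _ _).trans <| max_le ((totalDegree_add _ _).trans <| max_le
      ((totalDegree_add _ _).trans (max_le (hdeg 0 1) (hdeg 0 1))) (totalDegree_pderiv_le hadeg))
      (totalDegree_pderiv_le hbdeg)
  obtain ⟨f, g, hf, hg, hfg, hfdeg, hgdeg⟩ := exists_pderiv_sub_pderiv_eq zero_ne_one hR hRdeg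
  refine ⟨![a + f, b + g], fun i => ?_, ?_⟩
  · fin_cases i
    · exact (totalDegree_add _ _).trans (max_le hadeg hfdeg)
    · exact (totalDegree_add _ _).trans (max_le hbdeg hgdeg)
  · have h00 : pderiv 1 (a + f) = σ 0 0 := by rw [map_add, ha, hf, add_zero]
    have h11 : -pderiv 0 (b + g) = σ 1 1 := by rw [map_add, hb, hg, add_zero, neg_neg]
    have h01 : pderiv 1 (b + g) - pderiv 0 (a + f) = σ 0 1 + σ 0 1 := by
      rw [map_add, map_add]
      linear_combination hfg
    simp only [psymCurl_eq, Matrix.cons_val_zero, Matrix.cons_val_one, h00, h11, h01]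
    refine Matrix.ext fun i j => ?_
    fin_cases i <;> fin_cases j <;> simp [h10] <;> module

/-- Decomposition `τ = sym curl v + x xᵀ q` of symmetric polynomial matrices,
with `q` uniquely determined by `τ`. -/
theorem stmt_8 (k : ℕ) (hk : 2 ≤ k) (τ : Matrix (Fin 2) (Fin 2) P2)
    (hsym : τᵀ = τ) (hdeg : ∀ i j, (τ i j).totalDegree ≤ k) :
    ∃ q : P2, q.totalDegree ≤ k - 2 ∧
      (∃ v : Fin 2 → P2, (∀ i, (v i).totalDegree ≤ k + 1) ∧
        τ = psymCurl v + xxT q) ∧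
      ∀ q' : P2, q'.totalDegree ≤ k - 2 →
        (∃ v' : Fin 2 → P2, (∀ i, (v' i).totalDegree ≤ k + 1) ∧
          τ = psymCurl v' + xxT q') →
        q' = q := by
  obtain ⟨m, rfl⟩ : ∃ m, k = m + 2 := ⟨k - 2, by omega⟩
  have hunique : ∀ q v, τ = psymCurl v + xxT q → q = pdivDivXXTInv (pdivDiv τ) := by
    rintro q v rfl
    rw [pdivDiv_add, pdivDiv_psymCurl, zero_add, pdivDivXXTInv_pdivDiv_xxT]
  set q := pdivDivXXTInv (pdivDiv τ)
  have hq : q.totalDegree ≤ m := (totalDegree_mulCoeff_le _ _).trans (totalDegree_pdivDiv_le hdeg)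
  obtain ⟨v, hv, hσ⟩ := exists_psymCurl_eq (σ := τ - xxT q) (n := m + 1)
    (by rw [Matrix.transpose_sub, hsym, xxT_transpose])
    (by rw [pdivDiv_sub, pdivDiv_xxT_pdivDivXXTInv, sub_self])
    fun i j => (totalDegree_sub _ _).trans
      (max_le (hdeg i j) ((totalDegree_xxT_apply_le q i j).trans (by omega)))
  exact ⟨q, hq, ⟨v, hv, by rw [hσ, sub_add_cancel]⟩, fun q' _ ⟨v', _, h⟩ => hunique q' v' h⟩
end

section
/- Let k ≥ 2 be an integer. For every polynomial vector field w = (w₁, w₂) with components of total degree at most k−2 there exists a symmetric polynomial matrix τ whose entries have total degree at most k−1 such that rot τ = w. -/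
open MvPolynomial Matrix

/-!
A diagonal matrix already suffices: `(rot τ)₁ = -∂₂τ₁₁` and `(rot τ)₂ = ∂₁τ₂₂` when `τ` is
diagonal, so one takes `τ₁₁ = -∫ w₁ dx₂` and `τ₂₂ = ∫ w₂ dx₁`. Termwise integration of a
polynomial in one variable raises the total degree by at most one.
-/

namespace MvPolynomial

variable {σ R : Type*} [Field R]

noncomputable def antideriv (i : σ) (p : MvPolynomial σ R) : MvPolynomial σ R :=
  ∑ s ∈ p.support, monomial (s + Finsupp.single i 1) (coeff s p / (s i + 1))

theorem pderiv_antideriv [CharZero R] (i : σ) (p : MvPolynomial σ R) :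
    pderiv i (antideriv i p) = p := by
  conv_rhs => rw [p.as_sum]
  refine (map_sum _ _ _).trans (Finset.sum_congr rfl fun s _ => ?_)
  rw [pderiv_monomial, add_tsub_cancel_right]
  simp [div_mul_cancel₀ _ (Nat.cast_add_one_ne_zero (R := R) (s i))]

theorem totalDegree_antideriv_le (i : σ) (p : MvPolynomial σ R) :
    (antideriv i p).totalDegree ≤ p.totalDegree + 1 := by
  refine (totalDegree_finsetSum _ _).trans (Finset.sup_le fun s hs => ?_)
  refine (totalDegree_monomial_le _ _).trans ?_
  change Finsupp.degree (s + Finsupp.single i 1) ≤ _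
  rw [map_add, Finsupp.degree_single]
  exact Nat.add_le_add_right (le_totalDegree hs) 1

end MvPolynomial

noncomputable def rotPotential (w : Fin 2 → P2) : Matrix (Fin 2) (Fin 2) P2 :=
  diagonal ![-antideriv 1 (w 0), antideriv 0 (w 1)]

theorem transpose_rotPotential (w : Fin 2 → P2) : (rotPotential w)ᵀ = rotPotential w :=
  diagonal_transpose _

theorem prot_rotPotential (w : Fin 2 → P2) : prot (rotPotential w) = w := by
  funext i
  fin_cases i <;> simp [prot, rotPotential, pderiv_antideriv]

theorem totalDegree_rotPotential_le {w : Fin 2 → P2} {n : ℕ}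
    (hw : ∀ i, (w i).totalDegree ≤ n) (i j : Fin 2) :
    (rotPotential w i j).totalDegree ≤ n + 1 := by
  have h₀ := (totalDegree_antideriv_le 1 (w 0)).trans (Nat.add_le_add_right (hw 0) 1)
  have h₁ := (totalDegree_antideriv_le 0 (w 1)).trans (Nat.add_le_add_right (hw 1) 1)
  fin_cases i <;> fin_cases j <;> simp [rotPotential, h₀, h₁]

/-- `rot` maps symmetric polynomial matrices of degree ≤ k−1 onto polynomial
vector fields of degree ≤ k−2. -/
theorem stmt_13 (k : ℕ) (hk : 2 ≤ k) (w : Fin 2 → P2)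
    (hdeg : ∀ i, (w i).totalDegree ≤ k - 2) :
    ∃ τ : Matrix (Fin 2) (Fin 2) P2,
      τᵀ = τ ∧ (∀ i j, (τ i j).totalDegree ≤ k - 1) ∧ prot τ = w := by
  have hk' : k - 2 + 1 = k - 1 := by omega
  refine ⟨rotPotential w, transpose_rotPotential w, fun i j => ?_, prot_rotPotential w⟩
  exact hk' ▸ totalDegree_rotPotential_le hdeg i j
end

section
/- Let k ≥ 2 be an integer. For every polynomial vector field w = (w₁, w₂) with components of total degree at most k−2 there exists a unique polynomial vector field v = (v₁, v₂) with components of total degree at most k−2 such that rot(sym(x^⊥ ⊗ v)) = w; that is, rot is a bijection from {sym(x^⊥ ⊗ v) : v with components of total degree ≤ k−2} onto the polynomial vector fields with components of total degree at most k−2. -/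
/-!
Write `E = X₁∂₁ + X₂∂₂` for the Euler operator and `ω = ∂₁v₂ − ∂₂v₁`, which is `vecRot v` (the
code indexes coordinates by `Fin 2 = {0, 1}`). A direct computation gives `rot (sym (x^⊥ ⊗ v)) = -(3v + Ev − ω x^⊥)/2`.
This map does not raise total degrees, so on the finite-dimensional space of fields of degree
`≤ k - 2` it is bijective as soon as it is injective. If `3v + Ev = ω x^⊥`, applying `vecRot` to
both sides gives `3ω + Eω = 0`; as `E` multiplies a monomial of degree `d` by `d`, the operator
`3 + E` is injective, so `ω = 0` and then `v = 0`.
-/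

open MvPolynomial Matrix

namespace MvPolynomial

section Semiring

variable {σ R : Type*} [CommSemiring R]

theorem coeff_X_mul_pderiv_self (i : σ) (p : MvPolynomial σ R) (m : σ →₀ ℕ) :
    coeff m (X i * pderiv i p) = m i * coeff m p := by
  classical
  rw [coeff_X_mul', coeff_pderiv]
  split_ifs with hi
  · rw [Finsupp.mem_support_iff] at hi
    rw [Finsupp.sub_add_single_one_cancel hi, Finsupp.tsub_apply, Finsupp.single_eq_same,
      ← Nat.cast_add_one, Nat.sub_add_cancel (Nat.one_le_iff_ne_zero.2 hi), mul_comm]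
  · simp [Finsupp.notMem_support_iff.1 hi]

theorem totalDegree_X_mul_pderiv_le (i j : σ) (p : MvPolynomial σ R) :
    (X j * pderiv i p).totalDegree ≤ p.totalDegree := by
  classical
  refine Finset.sup_le fun m hm => ?_
  rw [mem_support_iff, coeff_X_mul', coeff_pderiv] at hm
  split_ifs at hm with hj
  · have hmem : m - Finsupp.single j 1 + Finsupp.single i 1 ∈ p.support :=
      mem_support_iff.2 (left_ne_zero_of_mul hm)
    refine le_of_eq_of_le ?_ (le_totalDegree hmem)
    change m.degree = (m - Finsupp.single j 1 + Finsupp.single i 1).degree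
    conv_lhs => rw [← Finsupp.sub_add_single_one_cancel (Finsupp.mem_support_iff.1 hj)]
    simp only [map_add, Finsupp.degree_single]
  · exact absurd rfl hm

theorem X_mul_pderiv_mem_restrictTotalDegree (i j : σ) {n : ℕ} {p : MvPolynomial σ R}
    (hp : p ∈ restrictTotalDegree σ R n) : X j * pderiv i p ∈ restrictTotalDegree σ R n := by
  rw [mem_restrictTotalDegree] at hp ⊢
  exact (totalDegree_X_mul_pderiv_le i j p).trans hp

variable [Fintype σ]

noncomputable def euler : Derivation R (MvPolynomial σ R) (MvPolynomial σ R) :=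
  ∑ i : σ, (X i : MvPolynomial σ R) • pderiv i

theorem euler_apply (p : MvPolynomial σ R) : euler p = ∑ i, X i * pderiv i p := by
  rw [euler, ← Derivation.coeFnAddMonoidHom_apply, map_sum, Finset.sum_apply]
  rfl

theorem euler_X (k : σ) : euler (X k : MvPolynomial σ R) = X k := by
  classical
  simp [euler_apply, pderiv_X, Pi.single_apply]

theorem coeff_euler (p : MvPolynomial σ R) (m : σ →₀ ℕ) :
    coeff m (euler p) = m.degree * coeff m p := by
  simp [euler_apply, coeff_sum, coeff_X_mul_pderiv_self, Finsupp.degree_eq_sum, Finset.sum_mul]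

theorem pderiv_euler (i : σ) (p : MvPolynomial σ R) :
    pderiv i (euler p) = pderiv i p + euler (pderiv i p) := by
  classical
  induction p using MvPolynomial.induction_on with
  | C a => simp
  | add p q hp hq => simp [hp, hq]; abel
  | mul_X p k hp =>
    simp only [Derivation.leibniz, euler_X, map_add, pderiv_X, Pi.single_apply, hp, smul_eq_mul]
    split_ifs <;> simp <;> ring

theorem euler_mem_restrictTotalDegree {n : ℕ} {p : MvPolynomial σ R}
    (hp : p ∈ restrictTotalDegree σ R n) : euler p ∈ restrictTotalDegree σ R n := by
  rw [euler_apply]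
  exact Submodule.sum_mem _ fun i _ => X_mul_pderiv_mem_restrictTotalDegree i i hp

end Semiring

section Domain

variable {σ R : Type*} [Fintype σ] [CommRing R] [IsDomain R] [CharZero R]

theorem eq_zero_of_natCast_mul_add_euler_eq_zero {n : ℕ} (hn : n ≠ 0) {p : MvPolynomial σ R}
    (h : (n : MvPolynomial σ R) * p + euler p = 0) : p = 0 := by
  ext m
  have hm := congrArg (coeff m) h
  rw [coeff_add, ← map_natCast C, coeff_C_mul, coeff_euler, coeff_zero, ← add_mul] at hm
  refine (mul_eq_zero.1 hm).resolve_left ?_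
  rw [← Nat.cast_add]
  exact Nat.cast_ne_zero.2 (by omega)

end Domain

end MvPolynomial

noncomputable def vecRot (v : Fin 2 → P2) : P2 := pderiv 0 (v 1) - pderiv 1 (v 0)

theorem prot_symTen (v : Fin 2 → P2) (i : Fin 2) :
    prot (symTen v) i = -(1 / 2 : ℝ) • (3 * v i + euler (v i) - vecRot v * xPerp i) := by
  fin_cases i <;>
  · simp only [prot, symTen, xPerp, vecRot, euler_apply, Fin.sum_univ_two, Matrix.of_apply,
      Matrix.cons_val_zero, Matrix.cons_val_one, Derivation.map_smul, Fin.zero_eta, Fin.mk_one,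
      Fin.isValue]
    rw [← smul_sub, neg_smul, ← smul_neg]
    congr 1
    simp only [map_add, map_neg, pderiv_mul, pderiv_X_self,
      pderiv_X_of_ne (by decide : (1 : Fin 2) ≠ 0), pderiv_X_of_ne (by decide : (0 : Fin 2) ≠ 1),
      Fin.isValue]
    ring

theorem vecRot_mul_xPerp (q : P2) : vecRot (fun i => q * xPerp i) = -(2 * q + euler q) := by
  simp only [vecRot, xPerp, euler_apply, Fin.sum_univ_two, Matrix.cons_val_zero,
    Matrix.cons_val_one, pderiv_mul, map_neg, pderiv_X_self, Fin.isValue]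
  ring

theorem vecRot_three_mul_add_euler (v : Fin 2 → P2) :
    vecRot (fun i => 3 * v i + euler (v i)) = 4 * vecRot v + euler (vecRot v) := by
  have h3 (i : Fin 2) (p : P2) : pderiv i (3 * p) = 3 * pderiv i p := by
    rw [pderiv_mul, show (3 : P2) = C 3 from (map_ofNat C 3).symm, pderiv_C]; ring
  simp only [vecRot, map_add, map_sub, h3, pderiv_euler]
  ring

theorem eq_zero_of_prot_symTen_eq_zero {v : Fin 2 → P2} (h : prot (symTen v) = 0) : v = 0 := by
  have hv (i : Fin 2) : 3 * v i + euler (v i) = vecRot v * xPerp i := by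
    have := congrFun h i
    rwa [prot_symTen, Pi.zero_apply, smul_eq_zero_iff_right (by norm_num), sub_eq_zero] at this
  have hrot : (2 : P2) * ((3 : ℕ) * vecRot v + euler (vecRot v)) = 0 := by
    have := congrArg vecRot (funext hv)
    rw [vecRot_three_mul_add_euler, vecRot_mul_xPerp] at this
    push_cast
    linear_combination this
  have hrot0 := eq_zero_of_natCast_mul_add_euler_eq_zero three_ne_zero
    ((mul_eq_zero.1 hrot).resolve_left two_ne_zero)
  funext i
  refine eq_zero_of_natCast_mul_add_euler_eq_zero three_ne_zero ?_
  rw [Nat.cast_ofNat, hv, hrot0, zero_mul]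

theorem prot_symTen_mem_restrictTotalDegree {n : ℕ} {v : Fin 2 → P2}
    (hv : ∀ i, v i ∈ restrictTotalDegree (Fin 2) ℝ n) (i : Fin 2) :
    prot (symTen v) i ∈ restrictTotalDegree (Fin 2) ℝ n := by
  have hX (j l m : Fin 2) : X j * pderiv l (v m) ∈ restrictTotalDegree (Fin 2) ℝ n :=
    X_mul_pderiv_mem_restrictTotalDegree l j (hv m)
  have h3 : 3 * v i ∈ restrictTotalDegree (Fin 2) ℝ n := by
    rw [show (3 : P2) = C 3 from (map_ofNat C 3).symm, C_mul']
    exact Submodule.smul_mem _ _ (hv i)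
  have hrot : vecRot v * xPerp i ∈ restrictTotalDegree (Fin 2) ℝ n := by
    match i with
    | 0 =>
      have : vecRot v * xPerp 0 = X 1 * pderiv 0 (v 1) - X 1 * pderiv 1 (v 0) := by
        simp only [vecRot, xPerp, Matrix.cons_val_zero]; ring
      rw [this]
      exact sub_mem (hX ..) (hX ..)
    | 1 =>
      have : vecRot v * xPerp 1 = X 0 * pderiv 1 (v 0) - X 0 * pderiv 0 (v 1) := by
        simp only [vecRot, xPerp, Matrix.cons_val_one, Matrix.cons_val_zero]; ring
      rw [this]
      exact sub_mem (hX ..) (hX ..)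
  rw [prot_symTen]
  exact Submodule.smul_mem _ _ (sub_mem (add_mem h3 (euler_mem_restrictTotalDegree (hv i))) hrot)

noncomputable def rotSymTen : (Fin 2 → P2) →ₗ[ℝ] (Fin 2 → P2) where
  toFun v := prot (symTen v)
  map_add' u v := by
    funext i
    simp only [prot, symTen, Matrix.of_apply, Pi.add_apply, mul_add, add_mul, smul_add, map_add]
    abel
  map_smul' a v := by
    funext i
    simp only [prot, symTen, Matrix.of_apply, Pi.smul_apply, mul_smul_comm, smul_mul_assoc,
      map_add, Derivation.map_smul, RingHom.id_apply]
    module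

theorem rotSymTen_injective : Function.Injective rotSymTen := by
  rw [← LinearMap.ker_eq_bot, LinearMap.ker_eq_bot']
  exact fun v => eq_zero_of_prot_symTen_eq_zero

noncomputable def vectorFieldsDegLE (n : ℕ) : Submodule ℝ (Fin 2 → P2) :=
  Submodule.pi Set.univ fun _ => restrictTotalDegree (Fin 2) ℝ n

instance (n : ℕ) : FiniteDimensional ℝ (vectorFieldsDegLE n) :=
  Module.Finite.iff_fg.2 (Submodule.fg_pi fun _ => Module.Finite.iff_fg.1 inferInstance)

theorem mem_vectorFieldsDegLE {n : ℕ} {v : Fin 2 → P2} :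
    v ∈ vectorFieldsDegLE n ↔ ∀ i, (v i).totalDegree ≤ n := by
  simp [vectorFieldsDegLE, Submodule.mem_pi, mem_restrictTotalDegree]

theorem exists_rotSymTen_eq {n : ℕ} {w : Fin 2 → P2} (hw : w ∈ vectorFieldsDegLE n) :
    ∃ v ∈ vectorFieldsDegLE n, rotSymTen v = w := by
  let f := rotSymTen.restrict (p := vectorFieldsDegLE n) (q := vectorFieldsDegLE n)
    fun v hv => Submodule.mem_pi.2 fun i _ =>
      prot_symTen_mem_restrictTotalDegree (fun j => Submodule.mem_pi.1 hv j trivial) i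
  have hf : Function.Injective f := fun a b hab =>
    Subtype.ext (rotSymTen_injective (congrArg Subtype.val hab))
  obtain ⟨v, hv⟩ := LinearMap.injective_iff_surjective.1 hf ⟨w, hw⟩
  exact ⟨v, v.2, congrArg Subtype.val hv⟩

theorem stmt_17_general (k : ℕ) (w : Fin 2 → P2)
    (hdeg : ∀ i, (w i).totalDegree ≤ k - 2) :
    ∃! v : Fin 2 → P2,
      (∀ i, (v i).totalDegree ≤ k - 2) ∧ prot (symTen v) = w := by
  obtain ⟨v, hv, rfl⟩ := exists_rotSymTen_eq (mem_vectorFieldsDegLE.2 hdeg)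
  exact ⟨v, ⟨mem_vectorFieldsDegLE.1 hv, rfl⟩, fun v' hv' => rotSymTen_injective hv'.2⟩

/-- `rot` is a bijection from `{sym(x^⊥ ⊗ v) : deg v ≤ k−2}` onto polynomial
vector fields of degree ≤ k−2. -/
theorem stmt_17 (k : ℕ) (hk : 2 ≤ k) (w : Fin 2 → P2)
    (hdeg : ∀ i, (w i).totalDegree ≤ k - 2) :
    ∃! v : Fin 2 → P2,
      (∀ i, (v i).totalDegree ≤ k - 2) ∧ prot (symTen v) = w :=
  stmt_17_general k w hdeg
end
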